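/- There exist constants 0 < c(p) ≤ C(p), depending only on p and independent of k and of the choices of the intervals I(J), such that for every K ∈ 𝐊: c(p)·3^k·w_k(K) ≤ Σ_{K' ∈ 𝐊, K' ⊆ K} w_k(K') ≤ C(p)·3^k·w_k(K) and c(p)·σ_k(K) ≤ Σ_{K' ∈ 𝐊, K' ⊆ K} σ_k(K') ≤ C(p)·σ_k(K). -/

import Mathlib

open MeasureTheory Set Filter

noncomputable section

namespace RTpaper

/-- The half-open interval `[a, b)` represented by the pair `(a, b)`. -/
def ivSet (I : ℝ × ℝ) : Set ℝ := Set.Ico I.1 I.2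

/-- The length of the interval represented by `I`. -/
def len (I : ℝ × ℝ) : ℝ := I.2 - I.1

/-- The middle triadic child of an interval. -/
def mid (I : ℝ × ℝ) : ℝ × ℝ := (I.1 + (I.2 - I.1) / 3, I.2 - (I.2 - I.1) / 3)

/-- The families `𝐊ᵢ` of the Reguera–Thiele construction. -/
def Kfam (k : ℕ) : ℕ → Set (ℝ × ℝ)
  | 0 => {((0 : ℝ), (1 : ℝ))}
  | (i + 1) =>
      {I | ∃ K ∈ Kfam k i, ∃ j : ℕ, j < 3 ^ (k - 1) ∧
        I = ((mid K).1 + (j : ℝ) * ((3 : ℝ) ^ (1 - (k : ℤ)) * len (mid K)),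
             (mid K).1 + ((j : ℝ) + 1) * ((3 : ℝ) ^ (1 - (k : ℤ)) * len (mid K)))}

/-- The families `𝐉ᵢ` (of interest for `i ≥ 1`). -/
def Jfam (k i : ℕ) : Set (ℝ × ℝ) := {J | ∃ K ∈ Kfam k (i - 1), J = mid K}

/-- The family `𝐊 = ⋃ᵢ 𝐊ᵢ`. -/
def KK (k : ℕ) : Set (ℝ × ℝ) := ⋃ i, Kfam k i

/-- The family `𝐉 = ⋃_{i ≥ 1} 𝐉ᵢ`. -/
def JJ (k : ℕ) : Set (ℝ × ℝ) := ⋃ i, Jfam k (i + 1)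

/-- The chosen triadic interval `I(J)` adjacent to `J` of length `3^{1-k}|J|`, encoded by a
choice function `ch` deciding, for each `J`, whether `I(J)` lies to the right (`true`) or to
the left (`false`) of `J`. -/
def IJ (k : ℕ) (ch : ℝ × ℝ → Bool) (J : ℝ × ℝ) : ℝ × ℝ :=
  if ch J then (J.2, J.2 + (3 : ℝ) ^ (1 - (k : ℤ)) * len J)
  else (J.1 - (3 : ℝ) ^ (1 - (k : ℤ)) * len J, J.1)

/-- The weight `w_k = Σ_{i ≥ 1} Σ_{J ∈ 𝐉ᵢ} (3^k/(3^{k-1}+1))^i · 1_{I(J)}`. -/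
def wgt (k : ℕ) (ch : ℝ × ℝ → Bool) (x : ℝ) : ℝ :=
  ∑' i : ℕ, ∑' J : ↥(Jfam k (i + 1)),
    Set.indicator (ivSet (IJ k ch (J : ℝ × ℝ)))
      (fun _ => ((3 : ℝ) ^ k / ((3 : ℝ) ^ (k - 1) + 1)) ^ (i + 1)) x

/-- The weight `σ_k = w_k^{1-p}` on `{w_k > 0}`, and `0` elsewhere. -/
def sgm (p : ℝ) (k : ℕ) (ch : ℝ × ℝ → Bool) (x : ℝ) : ℝ :=
  if 0 < wgt k ch x then wgt k ch x ^ (1 - p) else 0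

/-- `u(I) = ∫_I u`. -/
def mass (u : ℝ → ℝ) (I : ℝ × ℝ) : ℝ := ∫ x in ivSet I, u x

/-- `⟨u⟩_I = u(I)/|I|`. -/
def avg (u : ℝ → ℝ) (I : ℝ × ℝ) : ℝ := mass u I / len I

/-- `ch_𝐊(K)`: the members of `𝐊_{i+1}` contained in `K ∈ 𝐊ᵢ`. -/
def chK (k : ℕ) (K : ℝ × ℝ) : Set (ℝ × ℝ) :=
  {K' | ∃ i, K ∈ Kfam k i ∧ K' ∈ Kfam k (i + 1) ∧ ivSet K' ⊆ ivSet K}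

/-- Triadic intervals of `ℝ`. -/
def IsTriadic (I : ℝ × ℝ) : Prop :=
  ∃ n j : ℤ, I.1 = (j : ℝ) * (3 : ℝ) ^ (-n) ∧ I.2 = ((j : ℝ) + 1) * (3 : ℝ) ^ (-n)

/-- Maximal members of `S` strictly contained in `R`. -/
def maxIn (S : Set (ℝ × ℝ)) (R : ℝ × ℝ) : Set (ℝ × ℝ) :=
  {Q | Q ∈ S ∧ ivSet Q ⊂ ivSet R ∧
    ∀ Q' ∈ S, ivSet Q ⊆ ivSet Q' → ivSet Q' ⊂ ivSet R → ivSet Q' = ivSet Q}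

/-- Martingale `ε`-sparse families of (half-open) intervals. -/
def MSparse (ε : ℝ) (S : Set (ℝ × ℝ)) : Prop :=
  S.Countable ∧ (∀ I ∈ S, I.1 < I.2) ∧
    (∀ I ∈ S, ∀ J ∈ S, ivSet I ⊆ ivSet J ∨ ivSet J ⊆ ivSet I ∨ ivSet I ∩ ivSet J = ∅) ∧
    ∀ R ∈ S, (∑' Q : ↥(maxIn S R), len (Q : ℝ × ℝ)) ≤ ε * len R

/-- `Σ_{I ∈ F} ⟨u⟩_I^q · ⟨v⟩_I · |I|`. -/
def sumTest (q : ℝ) (u v : ℝ → ℝ) (F : Set (ℝ × ℝ)) : ℝ :=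
  ∑' I : ↥F, avg u (I : ℝ × ℝ) ^ q * avg v (I : ℝ × ℝ) * len (I : ℝ × ℝ)

open scoped ENNReal

/-!
Each `Q ∈ 𝐊ⱼ` carries the interval `I(Q^m) ⊆ Q \ Q^m` of length `3^{-k}|Q|`, and these intervals
are pairwise disjoint. Hence `w_k = r^{j+1}` on `I(Q^m)`, with `r = 3^k/(3^{k-1}+1)`, and `w_k = 0`
off their union, while `σ_k` is the same weight with `r` replaced by `r^{1-p} < 1`. For `K ∈ 𝐊ᵢ`
the descendants of `K` in `𝐊_{i+n}` cover a set of measure `3^{-n}|K|`, so for `0 ≤ r < 3` the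
weight has mass `r^{i+1} 3^{-k} (1 - r/3)⁻¹ |K|` on `K`, and summing over the descendants gives
`Σ_{K' ⊆ K} u(K') = (1 - r/3)⁻¹ u(K)`. The factor `(1 - r/3)⁻¹` is `3^{k-1} + 1` for `w_k` and lies
in `[1, 3/2]` for `σ_k`.
-/

section Development

variable {k i j : ℕ} {K Q : ℝ × ℝ}

lemma measurableSet_ivSet (I : ℝ × ℝ) : MeasurableSet (ivSet I) := measurableSet_Ico

lemma volume_ivSet (I : ℝ × ℝ) : volume (ivSet I) = ENNReal.ofReal (len I) := Real.volume_Ico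

lemma len_mid (K : ℝ × ℝ) : len (mid K) = len K / 3 := by
  simp only [len, mid]; ring

lemma ivSet_mid_subset (K : ℝ × ℝ) : ivSet (mid K) ⊆ ivSet K := by
  rintro x ⟨h₁, h₂⟩
  simp only [mid] at h₁ h₂
  constructor <;> linarith

lemma left_notMem_ivSet_mid (h : 0 < len K) : K.1 ∉ ivSet (mid K) := by
  rintro ⟨h₁, -⟩
  simp only [mid, len] at h₁ h
  linarith

lemma mid_injective : Function.Injective mid := by
  intro K K' h
  simp only [mid, Prod.mk.injEq] at h
  ext <;> linarith

/-- The `j`-th from the left of the `3^{k-1}` triadic subintervals of `K^m` of length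
`3^{-k}|K|`. -/
def child (k : ℕ) (K : ℝ × ℝ) (j : ℕ) : ℝ × ℝ :=
  ((mid K).1 + (j : ℝ) * ((3 : ℝ) ^ (1 - (k : ℤ)) * len (mid K)),
    (mid K).1 + ((j : ℝ) + 1) * ((3 : ℝ) ^ (1 - (k : ℤ)) * len (mid K)))

lemma Kfam_succ (k i : ℕ) :
    Kfam k (i + 1) = {Q | ∃ K ∈ Kfam k i, ∃ j < 3 ^ (k - 1), Q = child k K j} := rfl

lemma three_zpow_mul_len_mid (k : ℕ) (K : ℝ × ℝ) :
    (3 : ℝ) ^ (1 - (k : ℤ)) * len (mid K) = len K / 3 ^ k := by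
  rw [zpow_sub₀ three_ne_zero, zpow_one, zpow_natCast, len_mid]
  field_simp

lemma child_eq (K : ℝ × ℝ) (j : ℕ) :
    child k K j = ((mid K).1 + j * (len K / 3 ^ k), (mid K).1 + (j + 1) * (len K / 3 ^ k)) := by
  rw [child, three_zpow_mul_len_mid]

lemma len_child (K : ℝ × ℝ) (j : ℕ) : len (child k K j) = len K / 3 ^ k := by
  rw [child_eq]; simp only [len]; ring

lemma three_pow_eq_three_mul (hk : 1 ≤ k) : (3 : ℝ) ^ k = 3 * 3 ^ (k - 1) := by
  rw [← pow_succ', Nat.sub_add_cancel hk]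

lemma three_pow_pred_mul (hk : 1 ≤ k) (L : ℝ) : (3 : ℝ) ^ (k - 1) * (L / 3 ^ k) = L / 3 := by
  rw [three_pow_eq_three_mul hk]
  field_simp

lemma ivSet_child_subset_mid (hk : 1 ≤ k) {j : ℕ} (hj : j < 3 ^ (k - 1)) :
    ivSet (child k K j) ⊆ ivSet (mid K) := by
  rintro x ⟨h₁, h₂⟩
  rw [child_eq] at h₁ h₂
  have hw : 0 < len K / 3 ^ k := by nlinarith
  have hj' : (j : ℝ) + 1 ≤ 3 ^ (k - 1) := by exact_mod_cast hj
  have hend : (mid K).2 = (mid K).1 + 3 ^ (k - 1) * (len K / 3 ^ k) := by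
    rw [three_pow_pred_mul hk]; simp only [mid, len]; ring
  refine ⟨by nlinarith [j.cast_nonneg (α := ℝ)], ?_⟩
  rw [hend]
  nlinarith

lemma ivSet_mid_eq_biUnion_child (hk : 1 ≤ k) (K : ℝ × ℝ) :
    ivSet (mid K) = ⋃ j < 3 ^ (k - 1), ivSet (child k K j) := by
  refine subset_antisymm (fun x hx => ?_)
    (Set.iUnion₂_subset fun j hj => ivSet_child_subset_mid hk hj)
  obtain ⟨h₁, h₂⟩ := hx
  set w := len K / 3 ^ k
  have hend : (mid K).2 = (mid K).1 + 3 ^ (k - 1) * w := by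
    rw [three_pow_pred_mul hk]; simp only [mid, len]; ring
  have hw : 0 < w := by nlinarith [pow_pos (three_pos (α := ℝ)) (k - 1)]
  have hy : 0 ≤ (x - (mid K).1) / w := div_nonneg (by linarith) hw.le
  refine Set.mem_iUnion₂.mpr ⟨⌊(x - (mid K).1) / w⌋₊, ?_, ?_⟩
  · rw [Nat.floor_lt hy, div_lt_iff₀ hw]
    push_cast
    linarith
  · rw [child_eq]
    have hlo := Nat.floor_le hy
    have hhi := Nat.lt_floor_add_one ((x - (mid K).1) / w)
    rw [le_div_iff₀ hw] at hlo
    rw [div_lt_iff₀ hw] at hhi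
    constructor <;> linarith

lemma disjoint_child {j j' : ℕ} (h : j ≠ j') :
    Disjoint (ivSet (child k K j)) (ivSet (child k K j')) := by
  wlog hlt : j < j' generalizing j j'
  · exact (this h.symm (lt_of_le_of_ne (not_lt.mp hlt) h.symm)).symm
  rw [Set.disjoint_left]
  rintro x ⟨h₁, h₂⟩ ⟨h₃, -⟩
  rw [child_eq] at h₁ h₂ h₃
  have hjj : (j : ℝ) + 1 ≤ j' := by exact_mod_cast hlt
  nlinarith

lemma len_pos_of_mem_Kfam (hK : K ∈ Kfam k i) : 0 < len K := by
  induction i generalizing K with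
  | zero => simp only [Kfam, Set.mem_singleton_iff] at hK; simp [hK, len]
  | succ i ih =>
    rw [Kfam_succ] at hK
    obtain ⟨P, hP, j, -, rfl⟩ := hK
    rw [len_child]
    exact div_pos (ih hP) (by positivity)

lemma left_mem_ivSet (hK : K ∈ Kfam k i) : K.1 ∈ ivSet K :=
  ⟨le_rfl, sub_pos.mp (len_pos_of_mem_Kfam hK)⟩

lemma Kfam_countable (k i : ℕ) : (Kfam k i).Countable := by
  induction i with
  | zero => exact Set.countable_singleton _
  | succ i ih =>
    refine (ih.biUnion fun K _ => Set.countable_range (child k K)).mono ?_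
    rintro _ ⟨K, hK, j, -, rfl⟩
    exact Set.mem_biUnion hK ⟨j, rfl⟩

lemma Kfam_pairwiseDisjoint (hk : 1 ≤ k) (i : ℕ) : (Kfam k i).PairwiseDisjoint ivSet := by
  induction i with
  | zero => exact Set.pairwiseDisjoint_singleton _ _
  | succ i ih =>
    rintro _ ⟨P, hP, j, hj, rfl⟩ _ ⟨P', hP', j', hj', rfl⟩ hne
    by_cases hPP : P = P'
    · subst hPP
      exact disjoint_child fun h => hne (h ▸ rfl)
    · exact (ih hP hP' hPP).mono ((ivSet_child_subset_mid hk hj).trans (ivSet_mid_subset P))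
        ((ivSet_child_subset_mid hk hj').trans (ivSet_mid_subset P'))

lemma subset_mid_or_disjoint (hk : 1 ≤ k) (hK : K ∈ Kfam k i) (hQ : Q ∈ Kfam k j) (hij : i < j) :
    ivSet Q ⊆ ivSet (mid K) ∨ Disjoint (ivSet Q) (ivSet K) := by
  induction j generalizing Q with
  | zero => omega
  | succ j ih =>
    obtain ⟨P, hP, m, hm, rfl⟩ := hQ
    have hQP := ivSet_child_subset_mid (K := P) hk hm
    rcases (Nat.lt_succ_iff.mp hij).lt_or_eq with h | rfl
    · exact (ih hP h).imp (fun h' => hQP.trans ((ivSet_mid_subset P).trans h'))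
        fun h' => h'.mono_left (hQP.trans (ivSet_mid_subset P))
    · by_cases hPK : P = K
      · exact .inl (hPK ▸ hQP)
      · exact .inr ((Kfam_pairwiseDisjoint hk i hP hK hPK).mono_left
          (hQP.trans (ivSet_mid_subset P)))

lemma subset_or_disjoint (hk : 1 ≤ k) (hK : K ∈ Kfam k i) (hQ : Q ∈ Kfam k j) (hij : i ≤ j) :
    ivSet Q ⊆ ivSet K ∨ Disjoint (ivSet Q) (ivSet K) := by
  rcases hij.lt_or_eq with h | rfl
  · exact (subset_mid_or_disjoint hk hK hQ h).imp_left (·.trans (ivSet_mid_subset K))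
  · by_cases hQK : Q = K
    · exact .inl (hQK ▸ subset_rfl)
    · exact .inr (Kfam_pairwiseDisjoint hk i hQ hK hQK)

lemma Kfam_disjoint (hk : 1 ≤ k) (hij : i ≠ j) : Disjoint (Kfam k i) (Kfam k j) := by
  wlog h : i < j generalizing i j
  · exact (this hij.symm (lt_of_le_of_ne (not_lt.mp h) hij.symm)).symm
  refine Set.disjoint_left.mpr fun Q hi hj => ?_
  have hQ := left_mem_ivSet hi
  rcases subset_mid_or_disjoint hk hi hj h with h' | h'
  · exact left_notMem_ivSet_mid (len_pos_of_mem_Kfam hi) (h' hQ)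
  · exact Set.disjoint_left.mp h' hQ hQ

def descendants (k : ℕ) (K : ℝ × ℝ) (j : ℕ) : Set (ℝ × ℝ) := {Q | Q ∈ Kfam k j ∧ ivSet Q ⊆ ivSet K}

lemma descendants_countable (k : ℕ) (K : ℝ × ℝ) (j : ℕ) : (descendants k K j).Countable :=
  (Kfam_countable k j).mono fun _ h => h.1

lemma descendants_eq_empty_of_lt (hk : 1 ≤ k) (hK : K ∈ Kfam k i) (hj : j < i) :
    descendants k K j = ∅ := by
  refine Set.eq_empty_of_forall_notMem fun Q ⟨hQ, hQK⟩ => ?_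
  have hQ₁ := left_mem_ivSet hQ
  rcases subset_mid_or_disjoint hk hQ hK hj with h | h
  · exact left_notMem_ivSet_mid (len_pos_of_mem_Kfam hQ) (h (hQK hQ₁))
  · exact Set.disjoint_left.mp h (hQK hQ₁) hQ₁

lemma descendants_self (hk : 1 ≤ k) (hK : K ∈ Kfam k i) : descendants k K i = {K} := by
  refine Set.eq_singleton_iff_unique_mem.mpr ⟨⟨hK, subset_rfl⟩, fun Q ⟨hQ, hQK⟩ => ?_⟩
  by_contra hne
  have hQ₁ := left_mem_ivSet hQ
  exact Set.disjoint_left.mp (Kfam_pairwiseDisjoint hk i hQ hK hne) hQ₁ (hQK hQ₁)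

lemma biUnion_descendants_succ (hk : 1 ≤ k) (hK : K ∈ Kfam k i) (j : ℕ) (hij : i ≤ j) :
    ⋃ Q ∈ descendants k K (j + 1), ivSet Q = ⋃ P ∈ descendants k K j, ivSet (mid P) := by
  refine subset_antisymm (Set.iUnion₂_subset fun Q ⟨hQ, hQK⟩ x hx => ?_)
    (Set.iUnion₂_subset fun P ⟨hP, hPK⟩ x hx => ?_)
  · rw [Kfam_succ] at hQ
    obtain ⟨P, hP, m, hm, rfl⟩ := hQ
    have hxP := ivSet_child_subset_mid hk hm hx
    refine Set.mem_biUnion ⟨hP, ?_⟩ hxP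
    refine (subset_or_disjoint hk hK hP hij).resolve_right fun h => ?_
    exact Set.disjoint_left.mp h (ivSet_mid_subset P hxP) (hQK hx)
  · rw [ivSet_mid_eq_biUnion_child hk] at hx
    obtain ⟨m, hm, hxm⟩ := Set.mem_iUnion₂.mp hx
    refine Set.mem_biUnion ⟨⟨P, hP, m, hm, rfl⟩, ?_⟩ hxm
    exact ((ivSet_child_subset_mid hk hm).trans (ivSet_mid_subset P)).trans hPK

lemma tsum_ofReal_len_descendants (hk : 1 ≤ k) (hK : K ∈ Kfam k i) (n : ℕ) :
    ∑' Q : descendants k K (i + n), ENNReal.ofReal (len Q) = ENNReal.ofReal (len K / 3 ^ n) := by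
  induction n with
  | zero => rw [add_zero, descendants_self hk hK]; simp
  | succ n ih =>
    have hdisj : ∀ j, (descendants k K j).PairwiseDisjoint ivSet := fun j =>
      (Kfam_pairwiseDisjoint hk j).subset fun _ h => h.1
    calc ∑' Q : descendants k K (i + n + 1), ENNReal.ofReal (len Q)
        = volume (⋃ Q ∈ descendants k K (i + n + 1), ivSet Q) := by
          rw [measure_biUnion (descendants_countable k K _) (hdisj _)
            fun _ _ => measurableSet_ivSet _]
          simp only [volume_ivSet]
      _ = volume (⋃ P ∈ descendants k K (i + n), ivSet (mid P)) := by
          rw [biUnion_descendants_succ hk hK _ (Nat.le_add_right i n)]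
      _ = ∑' P : descendants k K (i + n), ENNReal.ofReal (len P) * ENNReal.ofReal 3⁻¹ := by
          rw [measure_biUnion (descendants_countable k K _)
            ((hdisj _).mono fun P => ivSet_mid_subset P) fun _ _ => measurableSet_ivSet _]
          refine tsum_congr fun P => ?_
          rw [volume_ivSet, len_mid, div_eq_mul_inv,
            ENNReal.ofReal_mul (len_pos_of_mem_Kfam P.2.1).le]
      _ = ENNReal.ofReal (len K / 3 ^ (n + 1)) := by
          rw [ENNReal.tsum_mul_right, ih, ← ENNReal.ofReal_mul
            (div_nonneg (len_pos_of_mem_Kfam hK).le (by positivity)), pow_succ]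
          ring_nf

lemma tsum_tsum_descendants_mul_len (hk : 1 ≤ k) (hK : K ∈ Kfam k i) (φ : ℕ → ℝ≥0∞) :
    ∑' j, ∑' Q : descendants k K j, φ j * ENNReal.ofReal (len Q)
      = ∑' n, φ (i + n) * ENNReal.ofReal (len K / 3 ^ n) := by
  rw [← (add_right_injective i).tsum_eq]
  · simp only [ENNReal.tsum_mul_left, tsum_ofReal_len_descendants hk hK]
  · intro j hj
    rcases lt_or_ge j i with h | h
    · simp [descendants_eq_empty_of_lt hk hK h] at hj
    · exact ⟨j - i, Nat.add_sub_cancel' h⟩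

lemma tsum_subset_eq_tsum_tsum_descendants (hk : 1 ≤ k) (K : ℝ × ℝ) (f : ℝ × ℝ → ℝ≥0∞) :
    ∑' K' : ↥{K' | K' ∈ KK k ∧ ivSet K' ⊆ ivSet K}, f K' = ∑' j, ∑' Q : descendants k K j, f Q := by
  have hset : {K' | K' ∈ KK k ∧ ivSet K' ⊆ ivSet K} = ⋃ j, descendants k K j := by
    ext; simp [KK, descendants]
  have hdisj : Pairwise (Function.onFun Disjoint (descendants k K)) := fun i j hij =>
    (Kfam_disjoint hk hij).mono (fun _ h => h.1) (fun _ h => h.1)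
  rw [tsum_congr_set_coe f hset, ← ENNReal.tsum_sigma' fun p : Σ j, descendants k K j => f p.2]
  exact ((Set.unionEqSigmaOfDisjoint hdisj).symm.tsum_eq fun x => f x).symm

section IJ

variable {ch : ℝ × ℝ → Bool}

lemma IJ_mid_eq (K : ℝ × ℝ) : IJ k ch (mid K) = if ch (mid K)
    then ((mid K).2, (mid K).2 + len K / 3 ^ k) else ((mid K).1 - len K / 3 ^ k, (mid K).1) := by
  rw [IJ, three_zpow_mul_len_mid]

lemma disjoint_IJ_mid (K : ℝ × ℝ) : Disjoint (ivSet (IJ k ch (mid K))) (ivSet (mid K)) := by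
  rw [IJ_mid_eq]
  split <;> simp only [ivSet, Set.Ico_disjoint_Ico]
  · exact (min_le_right _ _).trans (le_max_left _ _)
  · exact (min_le_left _ _).trans (le_max_right _ _)

lemma ivSet_IJ_mid_subset (hk : 1 ≤ k) (hK : 0 ≤ len K) : ivSet (IJ k ch (mid K)) ⊆ ivSet K := by
  have h3 : (3 : ℝ) ≤ 3 ^ k := le_self_pow₀ (by norm_num) (by omega)
  have hshort : len K / 3 ^ k ≤ len K / 3 := div_le_div_of_nonneg_left hK (by norm_num) h3
  rw [IJ_mid_eq]
  split <;> rintro x ⟨h₁, h₂⟩ <;> simp only [len, mid] at hK hshort h₁ h₂ <;>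
    constructor <;> linarith

lemma IJ_mid_subset_or_disjoint (hk : 1 ≤ k) (hK : K ∈ Kfam k i) (hQ : Q ∈ Kfam k j) :
    ivSet Q ⊆ ivSet K ∨ Disjoint (ivSet (IJ k ch (mid Q))) (ivSet K) := by
  have hIQ := ivSet_IJ_mid_subset (ch := ch) hk (len_pos_of_mem_Kfam hQ).le
  rcases le_or_gt i j with hij | hji
  · exact (subset_or_disjoint hk hK hQ hij).imp_right (·.mono_left hIQ)
  · refine .inr ?_
    rcases subset_mid_or_disjoint hk hQ hK hji with h | h
    · exact (disjoint_IJ_mid Q).mono_right h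
    · exact h.symm.mono_left hIQ

lemma eq_of_mem_IJ_mid (hk : 1 ≤ k) {Q' : ℝ × ℝ} {x : ℝ} (hQ : Q ∈ Kfam k i) (hQ' : Q' ∈ Kfam k j)
    (hx : x ∈ ivSet (IJ k ch (mid Q))) (hx' : x ∈ ivSet (IJ k ch (mid Q'))) : i = j ∧ Q = Q' := by
  have hxQ := ivSet_IJ_mid_subset hk (len_pos_of_mem_Kfam hQ).le hx
  have hxQ' := ivSet_IJ_mid_subset hk (len_pos_of_mem_Kfam hQ').le hx'
  rcases lt_trichotomy i j with h | rfl | h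
  · exfalso
    rcases subset_mid_or_disjoint hk hQ hQ' h with h' | h'
    · exact Set.disjoint_left.mp (disjoint_IJ_mid Q) hx (h' hxQ')
    · exact Set.disjoint_left.mp h' hxQ' hxQ
  · refine ⟨rfl, ?_⟩
    by_contra hne
    exact Set.disjoint_left.mp (Kfam_pairwiseDisjoint hk i hQ hQ' hne) hxQ hxQ'
  · exfalso
    rcases subset_mid_or_disjoint hk hQ' hQ h with h' | h'
    · exact Set.disjoint_left.mp (disjoint_IJ_mid Q') hx' (h' hxQ)
    · exact Set.disjoint_left.mp h' hxQ hxQ'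

end IJ

lemma Jfam_succ (k i : ℕ) : Jfam k (i + 1) = mid '' Kfam k i := by
  ext J
  simp [Jfam, eq_comm]

instance (k i : ℕ) : Countable (Jfam k (i + 1)) := by
  rw [Jfam_succ]
  exact ((Kfam_countable k i).image mid).to_subtype

/-- `c i` is the value on `I(J)` for `J ∈ 𝐉_{i+1}`, i.e. for `J = Q^m` with `Q ∈ 𝐊ᵢ`. -/
def layerSum {M : Type*} [AddCommMonoid M] [TopologicalSpace M] (k : ℕ) (ch : ℝ × ℝ → Bool)
    (c : ℕ → M) (x : ℝ) : M :=
  ∑' i, ∑' J : Jfam k (i + 1), (ivSet (IJ k ch J)).indicator (fun _ => c i) x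

section LayerSum

variable {M N : Type*} [AddCommMonoid M] [TopologicalSpace M] [AddCommMonoid N] [TopologicalSpace N]
  {ch : ℝ × ℝ → Bool} {x : ℝ}

lemma layerSum_of_mem (hk : 1 ≤ k) (hQ : Q ∈ Kfam k i) (hx : x ∈ ivSet (IJ k ch (mid Q)))
    (c : ℕ → M) : layerSum k ch c x = c i := by
  have hJ : mid Q ∈ Jfam k (i + 1) := by rw [Jfam_succ]; exact ⟨Q, hQ, rfl⟩
  rw [layerSum, tsum_eq_single i, tsum_eq_single ⟨mid Q, hJ⟩, Set.indicator_of_mem hx]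
  · rintro ⟨J, hJ'⟩ hne
    rw [Jfam_succ] at hJ'
    obtain ⟨Q', hQ', rfl⟩ := hJ'
    refine Set.indicator_of_notMem (fun hx' => hne ?_) _
    simp [(eq_of_mem_IJ_mid hk hQ hQ' hx hx').2]
  · intro i' hi'
    refine (tsum_congr fun J => Set.indicator_of_notMem (fun hx' => hi' ?_) _).trans tsum_zero
    obtain ⟨Q', hQ', hJQ'⟩ := (Jfam_succ k i' ▸ J.2 : (J : ℝ × ℝ) ∈ mid '' Kfam k i')
    rw [← hJQ'] at hx'
    exact (eq_of_mem_IJ_mid hk hQ hQ' hx hx').1.symm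

lemma layerSum_of_forall_notMem (h : ∀ i, ∀ Q ∈ Kfam k i, x ∉ ivSet (IJ k ch (mid Q)))
    (c : ℕ → M) : layerSum k ch c x = 0 := by
  refine (tsum_congr fun i =>
    (tsum_congr fun J => Set.indicator_of_notMem ?_ _).trans tsum_zero).trans tsum_zero
  obtain ⟨Q, hQ, hJQ⟩ := (Jfam_succ k i ▸ J.2 : (J : ℝ × ℝ) ∈ mid '' Kfam k i)
  exact hJQ ▸ h i Q hQ

lemma layerSum_comp (hk : 1 ≤ k) (f : M → N) (hf : f 0 = 0) (c : ℕ → M) (x : ℝ) :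
    f (layerSum k ch c x) = layerSum k ch (f ∘ c) x := by
  by_cases h : ∃ i, ∃ Q ∈ Kfam k i, x ∈ ivSet (IJ k ch (mid Q))
  · obtain ⟨i, Q, hQ, hx⟩ := h
    rw [layerSum_of_mem hk hQ hx, layerSum_of_mem hk hQ hx, Function.comp_apply]
  · simp only [not_exists, not_and] at h
    rw [layerSum_of_forall_notMem h, layerSum_of_forall_notMem h, hf]

end LayerSum

section Measure

variable {ch : ℝ × ℝ → Bool}

lemma volume_IJ_mid (K : ℝ × ℝ) :
    volume (ivSet (IJ k ch (mid K))) = ENNReal.ofReal (len K / 3 ^ k) := by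
  rw [volume_ivSet, IJ_mid_eq]
  split <;> simp only [len] <;> ring_nf

lemma measurable_layerSum_term (c : ℝ≥0∞) (i : ℕ) :
    Measurable fun x => ∑' J : Jfam k (i + 1), (ivSet (IJ k ch J)).indicator (fun _ => c) x :=
  Measurable.tsum fun _ => measurable_const.indicator (measurableSet_ivSet _)

lemma measurable_layerSum (c : ℕ → ℝ≥0∞) : Measurable (layerSum k ch c) :=
  Measurable.tsum fun i => measurable_layerSum_term (c i) i

lemma tsum_volume_IJ_inter (hk : 1 ≤ k) (hK : K ∈ Kfam k i) (j : ℕ) :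
    ∑' J : Jfam k (j + 1), volume (ivSet (IJ k ch J) ∩ ivSet K)
      = ∑' Q : descendants k K j, ENNReal.ofReal (3 ^ k)⁻¹ * ENNReal.ofReal (len Q) := by
  rw [Jfam_succ, tsum_image (fun J => volume (ivSet (IJ k ch J) ∩ ivSet K)) mid_injective.injOn,
    tsum_subtype (Kfam k j) fun Q => volume (ivSet (IJ k ch (mid Q)) ∩ ivSet K),
    tsum_subtype (descendants k K j) fun Q => ENNReal.ofReal (3 ^ k)⁻¹ * ENNReal.ofReal (len Q)]
  refine tsum_congr fun Q => ?_
  by_cases hQ : Q ∈ Kfam k j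
  · by_cases hQK : ivSet Q ⊆ ivSet K
    · have hIK := (ivSet_IJ_mid_subset (ch := ch) hk (len_pos_of_mem_Kfam hQ).le).trans hQK
      rw [Set.indicator_of_mem hQ, Set.indicator_of_mem (show Q ∈ descendants k K j from ⟨hQ, hQK⟩),
        Set.inter_eq_left.mpr hIK, volume_IJ_mid, ← ENNReal.ofReal_mul (by positivity),
        div_eq_inv_mul]
    · rw [Set.indicator_of_mem hQ, Set.indicator_of_notMem fun h => hQK h.2,
        ((IJ_mid_subset_or_disjoint hk hK hQ).resolve_left hQK).inter_eq, measure_empty]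
  · rw [Set.indicator_of_notMem hQ, Set.indicator_of_notMem fun h => hQ h.1]

lemma lintegral_layerSum (hk : 1 ≤ k) (hK : K ∈ Kfam k i) (c : ℕ → ℝ≥0∞) :
    ∫⁻ x in ivSet K, layerSum k ch c x
      = ∑' n, c (i + n) * ENNReal.ofReal (len K / 3 ^ k / 3 ^ n) := by
  calc ∫⁻ x in ivSet K, layerSum k ch c x
      = ∑' j, ∑' J : Jfam k (j + 1),
          ∫⁻ x in ivSet K, (ivSet (IJ k ch J)).indicator (fun _ => c j) x := by
        unfold layerSum
        rw [lintegral_tsum fun j => (measurable_layerSum_term (c j) j).aemeasurable]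
        exact tsum_congr fun j => lintegral_tsum fun J =>
          (measurable_const.indicator (measurableSet_ivSet _)).aemeasurable
    _ = ∑' j, ∑' Q : descendants k K j,
          c j * ENNReal.ofReal (3 ^ k)⁻¹ * ENNReal.ofReal (len Q) := by
        refine tsum_congr fun j => ?_
        simp only [lintegral_indicator_const (measurableSet_ivSet _),
          Measure.restrict_apply (measurableSet_ivSet _), ENNReal.tsum_mul_left,
          tsum_volume_IJ_inter hk hK, mul_assoc]
    _ = ∑' n, c (i + n) * ENNReal.ofReal (len K / 3 ^ k / 3 ^ n) := by
        rw [tsum_tsum_descendants_mul_len hk hK fun j => c j * ENNReal.ofReal (3 ^ k)⁻¹]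
        refine tsum_congr fun n => ?_
        rw [mul_assoc, ← ENNReal.ofReal_mul (by positivity)]
        ring_nf

end Measure

lemma mass_nonneg {u : ℝ → ℝ} (hu : ∀ x, 0 ≤ u x) (I : ℝ × ℝ) : 0 ≤ mass u I :=
  integral_nonneg hu

lemma tsum_ofReal_mul_geometric {a ρ : ℝ} (ha : 0 ≤ a) (hρ : 0 ≤ ρ) (hρ1 : ρ < 1) :
    ∑' n, ENNReal.ofReal (a * ρ ^ n) = ENNReal.ofReal (a * (1 - ρ)⁻¹) := by
  rw [← ENNReal.ofReal_tsum_of_nonneg (fun n => by positivity)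
    ((summable_geometric_of_lt_one hρ hρ1).mul_left a), tsum_mul_left,
    tsum_geometric_of_lt_one hρ hρ1]

def geomWeight (k : ℕ) (ch : ℝ × ℝ → Bool) (r : ℝ) : ℝ → ℝ := layerSum k ch fun j => r ^ (j + 1)

section GeomWeight

variable {ch : ℝ × ℝ → Bool} {r : ℝ}

lemma geomWeight_nonneg (hr : 0 ≤ r) (x : ℝ) : 0 ≤ geomWeight k ch r x :=
  tsum_nonneg fun _ => tsum_nonneg fun _ => Set.indicator_nonneg (fun _ _ => by positivity) _

lemma ofReal_geomWeight (hk : 1 ≤ k) (x : ℝ) :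
    ENNReal.ofReal (geomWeight k ch r x)
      = layerSum k ch (fun j => ENNReal.ofReal (r ^ (j + 1))) x :=
  layerSum_comp hk ENNReal.ofReal ENNReal.ofReal_zero _ x

lemma measurable_geomWeight (hk : 1 ≤ k) (hr : 0 ≤ r) : Measurable (geomWeight k ch r) := by
  have h : geomWeight k ch r
      = fun x => (layerSum k ch (fun j => ENNReal.ofReal (r ^ (j + 1))) x).toReal := by
    funext x
    rw [← ofReal_geomWeight hk, ENNReal.toReal_ofReal (geomWeight_nonneg hr x)]
  rw [h]
  exact (measurable_layerSum _).ennreal_toReal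

lemma mass_geomWeight (hk : 1 ≤ k) (hK : K ∈ Kfam k i) (hr0 : 0 ≤ r) (hr : r < 3) :
    mass (geomWeight k ch r) K = r ^ (i + 1) / 3 ^ k * (1 - r / 3)⁻¹ * len K := by
  have hL := (len_pos_of_mem_Kfam hK).le
  have hr' : 0 ≤ (1 - r / 3)⁻¹ := inv_nonneg.mpr (by linarith)
  rw [mass, integral_eq_lintegral_of_nonneg_ae (ae_of_all _ (geomWeight_nonneg hr0))
    (measurable_geomWeight hk hr0).aestronglyMeasurable]
  simp_rw [ofReal_geomWeight hk]
  rw [lintegral_layerSum hk hK]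
  calc (∑' n, ENNReal.ofReal (r ^ (i + n + 1)) * ENNReal.ofReal (len K / 3 ^ k / 3 ^ n)).toReal
      = (∑' n, ENNReal.ofReal (r ^ (i + 1) / 3 ^ k * len K * (r / 3) ^ n)).toReal := by
        congr 1
        refine tsum_congr fun n => ?_
        rw [← ENNReal.ofReal_mul (by positivity), div_pow]
        ring_nf
    _ = r ^ (i + 1) / 3 ^ k * (1 - r / 3)⁻¹ * len K := by
        rw [tsum_ofReal_mul_geometric (by positivity) (by positivity) (by linarith),
          ENNReal.toReal_ofReal (by positivity)]
        ring

lemma tsum_mass_geomWeight (hk : 1 ≤ k) (hK : K ∈ Kfam k i) (hr0 : 0 ≤ r) (hr : r < 3) :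
    ∑' K' : ↥{K' | K' ∈ KK k ∧ ivSet K' ⊆ ivSet K}, mass (geomWeight k ch r) K'
      = (1 - r / 3)⁻¹ * mass (geomWeight k ch r) K := by
  set φ : ℕ → ℝ := fun j => r ^ (j + 1) / 3 ^ k * (1 - r / 3)⁻¹
  have hφ : ∀ j, 0 ≤ φ j := fun j => by
    have : 0 ≤ (1 - r / 3)⁻¹ := inv_nonneg.mpr (by linarith)
    positivity
  have hmass : ∀ {j Q}, Q ∈ Kfam k j → mass (geomWeight k ch r) Q = φ j * len Q :=
    fun hQ => mass_geomWeight hk hQ hr0 hr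
  have hM := mass_nonneg (geomWeight_nonneg (k := k) (ch := ch) hr0)
  calc ∑' K' : ↥{K' | K' ∈ KK k ∧ ivSet K' ⊆ ivSet K}, mass (geomWeight k ch r) K'
      = (∑' K' : ↥{K' | K' ∈ KK k ∧ ivSet K' ⊆ ivSet K},
          ENNReal.ofReal (mass (geomWeight k ch r) K')).toReal := by
        rw [ENNReal.tsum_toReal_eq fun _ => ENNReal.ofReal_ne_top]
        exact tsum_congr fun K' => (ENNReal.toReal_ofReal (hM _)).symm
    _ = (∑' j, ∑' Q : descendants k K j, ENNReal.ofReal (φ j) * ENNReal.ofReal (len Q)).toReal := by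
        rw [tsum_subset_eq_tsum_tsum_descendants hk K
          fun K' => ENNReal.ofReal (mass (geomWeight k ch r) K')]
        congr 1
        exact tsum_congr fun j => tsum_congr fun Q => by rw [hmass Q.2.1, ENNReal.ofReal_mul (hφ j)]
    _ = (∑' n, ENNReal.ofReal (mass (geomWeight k ch r) K * (r / 3) ^ n)).toReal := by
        rw [tsum_tsum_descendants_mul_len hk hK]
        congr 1
        refine tsum_congr fun n => ?_
        have hφn : φ (i + n) = φ i * r ^ n := by simp only [φ]; ring
        rw [← ENNReal.ofReal_mul (hφ _), hmass hK, hφn, div_pow]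
        ring_nf
    _ = (1 - r / 3)⁻¹ * mass (geomWeight k ch r) K := by
        rw [tsum_ofReal_mul_geometric (hM K) (by positivity) (by linarith),
          ENNReal.toReal_ofReal (mul_nonneg (hM K) (inv_nonneg.mpr (by linarith)))]
        ring

end GeomWeight

lemma wgt_eq_geomWeight (k : ℕ) (ch : ℝ × ℝ → Bool) :
    wgt k ch = geomWeight k ch (3 ^ k / (3 ^ (k - 1) + 1)) := rfl

lemma sgm_eq_geomWeight (hk : 1 ≤ k) (p : ℝ) (ch : ℝ × ℝ → Bool) :
    sgm p k ch = geomWeight k ch ((3 ^ k / (3 ^ (k - 1) + 1)) ^ (1 - p)) := by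
  have ha : (0 : ℝ) < 3 ^ k / (3 ^ (k - 1) + 1) := by positivity
  funext x
  refine (layerSum_comp hk (fun y : ℝ => if 0 < y then y ^ (1 - p) else 0) (by simp) _ x).trans ?_
  congr 1
  funext j
  simp only [Function.comp_apply, if_pos (pow_pos ha _)]
  exact (Real.rpow_pow_comm ha.le _ _).symm

lemma one_lt_base_lt_three (hk : 1 ≤ k) :
    1 < (3 : ℝ) ^ k / (3 ^ (k - 1) + 1) ∧ (3 : ℝ) ^ k / (3 ^ (k - 1) + 1) < 3 := by
  have h1 : (1 : ℝ) ≤ 3 ^ (k - 1) := one_le_pow₀ (by norm_num)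
  rw [lt_div_iff₀ (by positivity), div_lt_iff₀ (by positivity), three_pow_eq_three_mul hk]
  constructor <;> linarith

lemma inv_one_sub_base_div_three (hk : 1 ≤ k) :
    (1 - (3 : ℝ) ^ k / (3 ^ (k - 1) + 1) / 3)⁻¹ = 3 ^ (k - 1) + 1 := by
  rw [three_pow_eq_three_mul hk]
  field_simp
  ring

end Development

/-- Lemma 3.5 of the paper (packing of `𝐊` below a fixed `K ∈ 𝐊`). -/
theorem statement4 (p : ℝ) (hp : 1 < p) :
    ∃ c C : ℝ, 0 < c ∧ c ≤ C ∧ ∀ k : ℕ, 3000 < k → ∀ ch : ℝ × ℝ → Bool, ∀ K ∈ KK k,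
      (c * ((3 : ℝ) ^ k * mass (wgt k ch) K) ≤
          (∑' K' : ↥{K' | K' ∈ KK k ∧ ivSet K' ⊆ ivSet K}, mass (wgt k ch) (K' : ℝ × ℝ)) ∧
        (∑' K' : ↥{K' | K' ∈ KK k ∧ ivSet K' ⊆ ivSet K}, mass (wgt k ch) (K' : ℝ × ℝ)) ≤
          C * ((3 : ℝ) ^ k * mass (wgt k ch) K)) ∧
      (c * mass (sgm p k ch) K ≤
          (∑' K' : ↥{K' | K' ∈ KK k ∧ ivSet K' ⊆ ivSet K}, mass (sgm p k ch) (K' : ℝ × ℝ)) ∧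
        (∑' K' : ↥{K' | K' ∈ KK k ∧ ivSet K' ⊆ ivSet K}, mass (sgm p k ch) (K' : ℝ × ℝ)) ≤
          C * mass (sgm p k ch) K) := by
  refine ⟨1 / 3, 3 / 2, by norm_num, by norm_num, fun k hk3000 ch K hK => ?_⟩
  have hk : 1 ≤ k := by omega
  obtain ⟨i, hKi⟩ := Set.mem_iUnion.mp hK
  obtain ⟨ha1, ha3⟩ := one_lt_base_lt_three hk
  have hq0 := Real.rpow_pos_of_pos (zero_lt_one.trans ha1) (1 - p)
  have hq1 := Real.rpow_lt_one_of_one_lt_of_neg ha1 (sub_neg.mpr hp)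
  rw [sgm_eq_geomWeight hk, wgt_eq_geomWeight, tsum_mass_geomWeight hk hKi (by linarith) ha3,
    tsum_mass_geomWeight hk hKi hq0.le (by linarith), inv_one_sub_base_div_three hk]
  set a : ℝ := 3 ^ k / (3 ^ (k - 1) + 1)
  have hMw := mass_nonneg (geomWeight_nonneg (k := k) (ch := ch) (r := a) (by linarith)) K
  have hMs := mass_nonneg (geomWeight_nonneg (k := k) (ch := ch) hq0.le) K
  have h3k := three_pow_eq_three_mul hk
  have h1 : (1 : ℝ) ≤ 3 ^ (k - 1) := one_le_pow₀ (by norm_num)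
  have hσ₁ : 1 ≤ (1 - a ^ (1 - p) / 3)⁻¹ := (one_le_inv₀ (by linarith)).mpr (by linarith)
  have hσ₂ : (1 - a ^ (1 - p) / 3)⁻¹ ≤ 3 / 2 := by
    rw [inv_le_comm₀ (by linarith) (by norm_num)]; linarith
  refine ⟨⟨?_, ?_⟩, ?_, ?_⟩ <;> nlinarith

end RTpaper
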